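/- Let μ > 0, ω > 0, N an even positive integer, and a ∈ ℝ. Define the N-tuple Ψ̂ᵃ_ω on the star graph by (Ψ̂ᵃ_ω)ᵢ = φ_{ω,−a} for i = 1,…,N/2 and (Ψ̂ᵃ_ω)ᵢ = φ_{ω,a} for i = N/2+1,…,N. Then Ψ̂ᵃ_ω satisfies the Kirchhoff vertex conditions ((Ψ̂ᵃ_ω)₁(0) = … = (Ψ̂ᵃ_ω)_N(0) and Σ_{k=1}^N (Ψ̂ᵃ_ω)_k'(0) = 0) and each component solves −ψ'' − ψ^{2μ+1} + ωψ = 0 on [0,∞). Hence for the free vertex (α = 0) and even N there is a one-parameter family of stationary states indexed by a ∈ ℝ. -/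

import Mathlib

open Set

/-- The soliton profile `φ_{ω,a}(x) = ((μ+1)ω)^{1/(2μ)} sech^{1/μ}(μ√ω (x − a))`. -/
noncomputable def solitonProfile (μ ω a : ℝ) (x : ℝ) : ℝ :=
  ((μ + 1) * ω) ^ (1 / (2 * μ)) *
    (1 / Real.cosh (μ * Real.sqrt ω * (x - a))) ^ (1 / μ)

/-!
With `c = cosh (μ√ω (x − a))` and `p = −1/μ`, the profile is `C c^p` with
`C = ((μ+1)ω)^{1/(2μ)}`. Using `sinh² = cosh² − 1`, the second derivative of `c^p` is
`μ²ω (p² c^p − p(p−1) c^(p−2)) = ω c^p − (μ+1)ω c^(p−2)`, while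
`(C c^p)^(2μ+1) = C (μ+1)ω c^(p−2)` because `C^(2μ) = (μ+1)ω`; so each shifted soliton solves
`−φ'' − φ^(2μ+1) + ωφ = 0`. The profile centred at `−a` is the reflection of the one centred
at `a`: the two agree at the vertex and have opposite slopes there, so the two halves of the
star graph cancel in the Kirchhoff sum when `N` is even.
-/

namespace Real

variable (C b a p : ℝ)

lemma hasDerivAt_const_mul_cosh_mul_sub_rpow (x : ℝ) :
    HasDerivAt (fun y => C * cosh (b * (y - a)) ^ p)
      (C * p * b * sinh (b * (x - a)) * cosh (b * (x - a)) ^ (p - 1)) x := by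
  have hlin : HasDerivAt (fun y => b * (y - a)) b x := by
    simpa using ((hasDerivAt_id x).sub_const a).const_mul b
  exact ((((hasDerivAt_cosh _).comp x hlin).rpow_const (p := p)
    (Or.inl (cosh_pos _).ne')).const_mul C).congr_deriv (by simp only [Function.comp_apply]; ring)

lemma deriv_deriv_const_mul_cosh_mul_sub_rpow (x : ℝ) :
    deriv (deriv fun y => C * cosh (b * (y - a)) ^ p) x =
      C * b ^ 2 *
        (p ^ 2 * cosh (b * (x - a)) ^ p - p * (p - 1) * cosh (b * (x - a)) ^ (p - 2)) := by
  have hlin : HasDerivAt (fun y => b * (y - a)) b x := by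
    simpa using ((hasDerivAt_id x).sub_const a).const_mul b
  have hderiv : deriv (fun y => C * cosh (b * (y - a)) ^ p) =
      fun y => C * p * b * sinh (b * (y - a)) * cosh (b * (y - a)) ^ (p - 1) :=
    funext fun y => (hasDerivAt_const_mul_cosh_mul_sub_rpow C b a p y).deriv
  have hsinh := ((hasDerivAt_sinh _).comp x hlin).const_mul (C * p * b)
  have hcosh := ((hasDerivAt_cosh _).comp x hlin).rpow_const (p := p - 1)
    (Or.inl (cosh_pos _).ne')
  have hderiv2 : HasDerivAt
      (fun y => C * p * b * sinh (b * (y - a)) * cosh (b * (y - a)) ^ (p - 1)) _ x :=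
    hsinh.mul hcosh
  rw [hderiv, hderiv2.deriv]
  set c := cosh (b * (x - a))
  have hc : 0 < c := cosh_pos _
  have hsinh_sq : sinh (b * (x - a)) ^ 2 = c ^ 2 - 1 := by rw [sinh_sq]
  have hpow_p : c ^ p = c ^ (p - 2) * c ^ 2 := by
    rw [← rpow_natCast, ← rpow_add hc]; norm_num
  have hpow_p_sub_one : c ^ (p - 1) = c ^ (p - 2) * c := by
    rw [← rpow_add_one hc.ne']; ring_nf
  simp only [Function.comp_apply]
  rw [hpow_p, hpow_p_sub_one, show p - 1 - 1 = p - 2 by ring]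
  linear_combination (C * p * b ^ 2 * (p - 1) * c ^ (p - 2)) * hsinh_sq

end Real

lemma solitonProfile_eq (μ ω a : ℝ) : solitonProfile μ ω a = fun x =>
    ((μ + 1) * ω) ^ (1 / (2 * μ)) * Real.cosh (μ * √ω * (x - a)) ^ (-(1 / μ)) := by
  ext x
  rw [solitonProfile, one_div (Real.cosh _), Real.inv_rpow (Real.cosh_pos _).le,
    ← Real.rpow_neg (Real.cosh_pos _).le]

lemma solitonProfile_neg (μ ω a x : ℝ) :
    solitonProfile μ ω (-a) x = solitonProfile μ ω a (-x) := by
  rw [solitonProfile, solitonProfile, show -x - a = -(x - -a) by ring, mul_neg, Real.cosh_neg]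

lemma deriv_solitonProfile_neg_add (μ ω a : ℝ) :
    deriv (solitonProfile μ ω (-a)) 0 + deriv (solitonProfile μ ω a) 0 = 0 := by
  have hreflect : solitonProfile μ ω (-a) = fun x => solitonProfile μ ω a (-x) :=
    funext (solitonProfile_neg μ ω a)
  rw [hreflect, deriv_comp_neg, neg_zero, neg_add_cancel]

lemma solitonProfile_rpow {μ ω : ℝ} (hμ : 0 < μ) (hω : 0 < ω) (a x : ℝ) :
    solitonProfile μ ω a x ^ (2 * μ + 1) = (μ + 1) * ω * ((μ + 1) * ω) ^ (1 / (2 * μ)) *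
      Real.cosh (μ * √ω * (x - a)) ^ (-(1 / μ) - 2) := by
  have hA : 0 < (μ + 1) * ω := by positivity
  have hc := Real.cosh_pos (μ * √ω * (x - a))
  rw [solitonProfile_eq, Real.mul_rpow (by positivity) (by positivity), ← Real.rpow_mul hA.le,
    ← Real.rpow_mul hc.le]
  have hexp_A : 1 / (2 * μ) * (2 * μ + 1) = 1 + 1 / (2 * μ) := by field_simp
  have hexp_c : -(1 / μ) * (2 * μ + 1) = -(1 / μ) - 2 := by field_simp; ring
  rw [hexp_A, hexp_c, Real.rpow_add hA, Real.rpow_one, mul_assoc]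

lemma solitonProfile_ode {μ ω : ℝ} (hμ : 0 < μ) (hω : 0 < ω) (a x : ℝ) :
    -deriv (deriv (solitonProfile μ ω a)) x - solitonProfile μ ω a x ^ (2 * μ + 1) +
      ω * solitonProfile μ ω a x = 0 := by
  rw [solitonProfile_rpow hμ hω, solitonProfile_eq, Real.deriv_deriv_const_mul_cosh_mul_sub_rpow,
    mul_pow, Real.sq_sqrt hω.le]
  field_simp
  ring

lemma Fin.sum_ite_lt_half {M : Type*} [AddCommMonoid M] {N : ℕ} (hN : Even N) (u v : M) :
    ∑ i : Fin N, (if (i : ℕ) < N / 2 then u else v) = (N / 2) • (u + v) := by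
  obtain ⟨k, rfl⟩ := hN
  simp [Fin.sum_univ_add, show (k + k) / 2 = k by omega]

theorem stmt_16_general (μ ω a : ℝ) (hμ : 0 < μ) (hω : 0 < ω)
    (N : ℕ) (hNeven : Even N)
    (Ψ : Fin N → ℝ → ℝ)
    (hΨ : ∀ i : Fin N, Ψ i =
      if (i : ℕ) < N / 2 then solitonProfile μ ω (-a) else solitonProfile μ ω a) :
    -- Kirchhoff vertex conditions: continuity at the vertex …
    (∀ i j : Fin N, Ψ i 0 = Ψ j 0) ∧
    -- … and vanishing total flux
    (∑ i : Fin N, deriv (Ψ i) 0 = 0) ∧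
    -- each component solves the stationary NLS on the half-line, so for the
    -- free vertex (α = 0) and even `N` there is a one-parameter family of
    -- stationary states indexed by `a ∈ ℝ`
    (∀ i : Fin N, ∀ x : ℝ, 0 ≤ x →
      -(deriv (deriv (Ψ i)) x) - Ψ i x ^ (2 * μ + 1) + ω * Ψ i x = 0) := by
  have hvertex : ∀ i, Ψ i 0 = solitonProfile μ ω a 0 := by
    intro i
    rw [hΨ i]
    split_ifs
    · rw [solitonProfile_neg, neg_zero]
    · rfl
  refine ⟨fun i j => (hvertex i).trans (hvertex j).symm, ?_, ?_⟩
  · simp only [hΨ, apply_ite (fun f : ℝ → ℝ => deriv f 0)]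
    rw [Fin.sum_ite_lt_half hNeven, deriv_solitonProfile_neg_add, smul_zero]
  · intro i x _
    rw [hΨ i]
    split_ifs
    · exact solitonProfile_ode hμ hω (-a) x
    · exact solitonProfile_ode hμ hω a x

theorem stmt_16 (μ ω a : ℝ) (hμ : 0 < μ) (hω : 0 < ω)
    (N : ℕ) (hN : 0 < N) (hNeven : Even N)
    (Ψ : Fin N → ℝ → ℝ)
    (hΨ : ∀ i : Fin N, Ψ i =
      if (i : ℕ) < N / 2 then solitonProfile μ ω (-a) else solitonProfile μ ω a) :
    -- Kirchhoff vertex conditions: continuity at the vertex …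
    (∀ i j : Fin N, Ψ i 0 = Ψ j 0) ∧
    -- … and vanishing total flux
    (∑ i : Fin N, deriv (Ψ i) 0 = 0) ∧
    -- each component solves the stationary NLS on the half-line, so for the
    -- free vertex (α = 0) and even `N` there is a one-parameter family of
    -- stationary states indexed by `a ∈ ℝ`
    (∀ i : Fin N, ∀ x : ℝ, 0 ≤ x →
      -(deriv (deriv (Ψ i)) x) - Ψ i x ^ (2 * μ + 1) + ω * Ψ i x = 0) :=
  stmt_16_general μ ω a hμ hω N hNeven Ψ hΨ
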